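/- Let k ≥ 2 and n ≥ 2, let A be the directed adjacency matrix of the corresponding graph G_k^n, set ℓ = k·(k-1)^(n-2), and let L = (k-1)·I - A, where I is the identity matrix of the same size as A. Then the characteristic polynomial of L over ℚ equals X · (X - k)^(k-1) · (X - (k-1))^(ℓ - k); equivalently, the eigenvalues of L are 0 with multiplicity 1, k with multiplicity k-1, and k-1 with multiplicity ℓ - k. -/

import Mathlib

/-- A word `w` of length `m` over the alphabet `Fin k` is adjacency-hopping if
`w i ≠ w (i+1)` for all `i` with `i + 1 < m`. -/
def IsAdjHop (k m : ℕ) (w : Fin m → Fin k) : Prop :=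
  ∀ i : ℕ, (h : i + 1 < m) → w ⟨i, by omega⟩ ≠ w ⟨i + 1, h⟩

/-- The vertex set of the corresponding graph `G_k^n`: all adjacency-hopping words of
length `n - 1` over `Fin k`. -/
abbrev Vtx (k n : ℕ) : Type := {w : Fin (n - 1) → Fin k // IsAdjHop k (n - 1) w}

/-- The edge relation of `G_k^n`: there is an edge from `u` to `v` iff `v j = u (j+1)`
for all `j` with `j + 1 ≤ n - 2`, and the last letter of `u` differs from the last
letter of `v`. -/
def Edge (k n : ℕ) (u v : Vtx k n) : Prop :=
  (∀ j : ℕ, (h : j + 1 ≤ n - 2) → v.1 ⟨j, by omega⟩ = u.1 ⟨j + 1, by omega⟩) ∧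
  ∀ h : n - 2 < n - 1, u.1 ⟨n - 2, h⟩ ≠ v.1 ⟨n - 2, h⟩

noncomputable instance (k n : ℕ) : Fintype (Vtx k n) := Fintype.ofFinite _

open Classical in
/-- The directed adjacency matrix of `G_k^n` over `ℚ`. -/
noncomputable def AdjMat (k n : ℕ) : Matrix (Vtx k n) (Vtx k n) ℚ :=
  Matrix.of fun u v => if Edge k n u v then 1 else 0

/-!
`G_k^(n+1)` is the line digraph of `G_k^n`: a word `u` of length `n` is an edge from its initial
subword `u.init` to its final subword `u.tail`, and two such edges are consecutive exactly when
`u.tail = v.init`. With `P` and `Q` the incidence matrices of `tail` and `init`, this says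
`A_(n+1) = P Qᵀ` and `A_n = Qᵀ P`, so by Sylvester's identity
`(X - c) ^ |V_n| * χ(c - P Qᵀ) = (X - c) ^ |V_(n+1)| * χ(c - Qᵀ P)` the characteristic polynomial
of `L_(n+1)` is that of `L_n` times a power of `X - (k - 1)`. The induction starts at `n = 2`,
where `A = J - I` and `L = k I - J`, and Sylvester's identity applies once more to `J = 𝟙 𝟙ᵀ`.
-/

open Finset Matrix Polynomial

section CharpolyMulComm

variable {α β R : Type*} [Fintype α] [Fintype β] [DecidableEq α] [DecidableEq β] [CommRing R]

theorem charpoly_smul_one_sub (c : R) (S : Matrix α α R) :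
    (c • 1 - S).charpoly = (-S).charpoly.comp (X - C c) := by
  rw [show c • 1 - S = -S - scalar α (-c) by
      simp [smul_one_eq_diagonal, sub_eq_add_neg, add_comm],
    charpoly_sub_scalar, map_neg, ← sub_eq_add_neg]

theorem charpoly_smul_one_sub_mul_comm (c : R) (M : Matrix α β R) (N : Matrix β α R) :
    (X - C c) ^ Fintype.card β * (c • 1 - M * N).charpoly =
      (X - C c) ^ Fintype.card α * (c • 1 - N * M).charpoly := by
  have h := congrArg (fun p => p.comp (X - C c)) (charpoly_mul_comm' (-M) N)
  simp only [mul_comp, X_pow_comp, Matrix.neg_mul, Matrix.mul_neg] at h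
  rwa [charpoly_smul_one_sub, charpoly_smul_one_sub]

end CharpolyMulComm

section Incidence

variable {U V : Type*} [DecidableEq V] (R : Type*) [Semiring R]

def incidence (f : U → V) : Matrix U V R :=
  Matrix.of fun u w => if f u = w then 1 else 0

theorem incidence_mul_transpose_incidence [Fintype V] (f g : U → V) :
    incidence R f * (incidence R g)ᵀ =
      Matrix.of fun u v => if f u = g v then 1 else 0 := by
  ext u v
  simp [incidence, mul_apply, eq_comm]

theorem transpose_incidence_mul_incidence_apply [Fintype U] (f g : U → V) (w w' : V) :
    ((incidence R f)ᵀ * incidence R g) w w' = #{u | f u = w ∧ g u = w'} := by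
  simp only [incidence, mul_apply, transpose_apply, of_apply, mul_ite, mul_one, mul_zero,
    ← ite_and, and_comm (a := g _ = w')]
  exact Finset.sum_boole _ _

end Incidence

section Words

variable {k m : ℕ}

namespace IsAdjHop

theorem init {w : Fin (m + 1) → Fin k} (hw : IsAdjHop k (m + 1) w) :
    IsAdjHop k m (Fin.init w) :=
  fun i h => hw i (by omega)

theorem tail {w : Fin (m + 1) → Fin k} (hw : IsAdjHop k (m + 1) w) :
    IsAdjHop k m (Fin.tail w) :=
  fun i h => hw (i + 1) (by omega)

theorem snoc {w : Fin (m + 1) → Fin k} (hw : IsAdjHop k (m + 1) w) {c : Fin k}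
    (hc : c ≠ w (Fin.last m)) : IsAdjHop k (m + 2) (Fin.snoc w c) := by
  intro i h
  rcases (show i < m ∨ i = m by omega) with hi | rfl
  · simpa [Fin.snoc, hi, show i < m + 1 by omega] using hw i (by omega)
  · simpa [Fin.snoc, Fin.last] using hc.symm

end IsAdjHop

namespace Vtx

def init (u : Vtx k (m + 3)) : Vtx k (m + 2) := ⟨Fin.init u.1, u.2.init⟩

def tail (u : Vtx k (m + 3)) : Vtx k (m + 2) := ⟨Fin.tail u.1, u.2.tail⟩

def snoc (w : Vtx k (m + 2)) (c : Fin k) (hc : c ≠ w.1 (Fin.last m)) : Vtx k (m + 3) :=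
  ⟨Fin.snoc w.1 c, w.2.snoc hc⟩

theorem edge_succ_iff (u v : Vtx k (m + 3)) : Edge k (m + 3) u v ↔ u.tail = v.init := by
  constructor
  · rintro ⟨h, -⟩
    exact Subtype.ext (funext fun j => (h j (by omega)).symm)
  · intro h
    have h' (j : Fin (m + 1)) : u.1 j.succ = v.1 j.castSucc := congrFun (congrArg Subtype.val h) j
    exact ⟨fun j hj => (h' ⟨j, by omega⟩).symm,
      fun _ => (h' ⟨m, by omega⟩).trans_ne (v.2 m (by omega))⟩

theorem edge_init_tail (u : Vtx k (m + 3)) : Edge k (m + 2) u.init u.tail :=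
  ⟨fun _ _ => rfl, fun _ => u.2 m (by omega)⟩

theorem init_tail_injective : Function.Injective fun u : Vtx k (m + 3) => (u.init, u.tail) := by
  intro u v h
  obtain ⟨hi, ht⟩ := Prod.mk.inj h
  apply Subtype.ext
  rw [← Fin.snoc_init_self u.1, ← Fin.snoc_init_self v.1]
  exact congrArg₂ Fin.snoc (congrArg Subtype.val hi)
    (congrFun (congrArg Subtype.val ht) (Fin.last _))

theorem exists_init_tail_of_edge {w w' : Vtx k (m + 2)} (h : Edge k (m + 2) w w') :
    ∃ u : Vtx k (m + 3), u.init = w ∧ u.tail = w' := by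
  refine ⟨w.snoc (w'.1 (Fin.last m)) (h.2 (by omega)).symm,
    Subtype.ext (by simp [Vtx.init, Vtx.snoc]), Subtype.ext (funext fun j => ?_)⟩
  refine Fin.lastCases ?_ (fun i => ?_) j
  · simp [Vtx.tail, Vtx.snoc, Fin.tail, Fin.succ_last]
  · change Fin.snoc (α := fun _ => Fin k) w.1 (w'.1 (Fin.last m)) i.castSucc.succ =
      w'.1 i.castSucc
    rw [Fin.succ_castSucc, Fin.snoc_castSucc]
    exact (h.1 i (by omega)).symm

def snocEquiv :
    (Σ w : Vtx k (m + 2), {c : Fin k // c ≠ w.1 (Fin.last m)}) ≃ Vtx k (m + 3) where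
  toFun p := p.1.snoc p.2.1 p.2.2
  invFun u := ⟨u.init, u.1 (Fin.last _), (u.2 m (by omega)).symm⟩
  left_inv p := Sigma.subtype_ext (Subtype.ext (by simp [Vtx.init, Vtx.snoc])) (by simp [Vtx.snoc])
  right_inv u := Subtype.ext (Fin.snoc_init_self u.1)

end Vtx

end Words

theorem card_vtx_two (k : ℕ) : Fintype.card (Vtx k 2) = k := by
  have e : Vtx k 2 ≃ (Fin 1 → Fin k) := Equiv.subtypeUnivEquiv fun _ _ h => absurd h (by omega)
  simp [Fintype.card_congr e]

theorem card_vtx (k m : ℕ) : Fintype.card (Vtx k (m + 2)) = k * (k - 1) ^ m := by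
  induction m with
  | zero => simp [card_vtx_two]
  | succ m ih =>
    rw [← Fintype.card_congr Vtx.snocEquiv, Fintype.card_sigma]
    simp [Fintype.card_subtype_compl, ih, pow_succ, mul_assoc]

noncomputable def laplacian (k n : ℕ) : Matrix (Vtx k n) (Vtx k n) ℚ :=
  ((k : ℚ) - 1) • 1 - AdjMat k n

section Laplacian

variable {k : ℕ}

theorem adjMat_succ_eq_incidence_mul (m : ℕ) :
    AdjMat k (m + 3) =
      incidence ℚ (Vtx.tail (k := k) (m := m)) * (incidence ℚ (Vtx.init (k := k) (m := m)))ᵀ := by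
  rw [incidence_mul_transpose_incidence]
  ext u v
  simp [AdjMat, Vtx.edge_succ_iff]

open Classical in
theorem card_filter_init_tail (m : ℕ) (w w' : Vtx k (m + 2)) :
    #{u : Vtx k (m + 3) | u.init = w ∧ u.tail = w'} = if Edge k (m + 2) w w' then 1 else 0 := by
  split_ifs with h
  · obtain ⟨u, hu⟩ := Vtx.exists_init_tail_of_edge h
    refine card_eq_one.mpr ⟨u, eq_singleton_iff_unique_mem.mpr ⟨by simpa using hu, ?_⟩⟩
    intro v hv
    exact Vtx.init_tail_injective (Prod.ext ((mem_filter.mp hv).2.1.trans hu.1.symm)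
      ((mem_filter.mp hv).2.2.trans hu.2.symm))
  · refine card_eq_zero.mpr (filter_eq_empty_iff.mpr ?_)
    rintro u - ⟨rfl, rfl⟩
    exact h (Vtx.edge_init_tail u)

theorem transpose_incidence_mul_eq_adjMat (m : ℕ) :
    (incidence ℚ (Vtx.init (k := k) (m := m)))ᵀ * incidence ℚ (Vtx.tail (k := k) (m := m)) =
      AdjMat k (m + 2) := by
  ext w w'
  rw [transpose_incidence_mul_incidence_apply, card_filter_init_tail]
  simp [AdjMat]

theorem charpoly_laplacian_succ (m : ℕ) :
    (X - C ((k : ℚ) - 1)) ^ Fintype.card (Vtx k (m + 2)) * (laplacian k (m + 3)).charpoly =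
      (X - C ((k : ℚ) - 1)) ^ Fintype.card (Vtx k (m + 3)) * (laplacian k (m + 2)).charpoly := by
  rw [laplacian, laplacian, adjMat_succ_eq_incidence_mul, ← transpose_incidence_mul_eq_adjMat]
  exact charpoly_smul_one_sub_mul_comm _ _ _

theorem edge_two_iff (u v : Vtx k 2) : Edge k 2 u v ↔ u ≠ v := by
  rw [Ne, Subtype.ext_iff, funext_iff, Fin.forall_fin_one]
  exact ⟨fun h => h.2 (by omega), fun h => ⟨fun j hj => absurd hj (by omega), fun _ => h⟩⟩

theorem laplacian_two_eq :
    laplacian k 2 =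
      (k : ℚ) • 1 -
        incidence ℚ (fun _ : Vtx k 2 => ()) * (incidence ℚ fun _ : Vtx k 2 => ())ᵀ := by
  rw [incidence_mul_transpose_incidence]
  ext u v
  by_cases h : u = v
  · simp [laplacian, AdjMat, edge_two_iff, h]
  · simp [laplacian, AdjMat, edge_two_iff, h, one_apply]

theorem charpoly_laplacian_two (hk : 1 ≤ k) :
    (laplacian k 2).charpoly = X * (X - C (k : ℚ)) ^ (k - 1) := by
  let J : Matrix (Vtx k 2) Unit ℚ := incidence ℚ fun _ => ()
  have hJ : (k : ℚ) • (1 : Matrix Unit Unit ℚ) - Jᵀ * J = 0 := by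
    ext
    simp [J, transpose_incidence_mul_incidence_apply, card_vtx_two]
  have h := charpoly_smul_one_sub_mul_comm (k : ℚ) J Jᵀ
  rw [← laplacian_two_eq, hJ, charpoly_zero, Fintype.card_unit, card_vtx_two, pow_one] at h
  obtain ⟨j, rfl⟩ : ∃ j, k = j + 1 := ⟨k - 1, by omega⟩
  apply mul_left_cancel₀ (X_sub_C_ne_zero ((j + 1 : ℕ) : ℚ))
  rw [h, Nat.add_sub_cancel]
  ring

-- Multiplying by `(X - (k - 1)) ^ k` keeps the exponent free of truncated subtraction.
theorem charpoly_laplacian_mul (hk : 1 ≤ k) (m : ℕ) :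
    (laplacian k (m + 2)).charpoly * (X - C ((k : ℚ) - 1)) ^ k =
      X * (X - C (k : ℚ)) ^ (k - 1) * (X - C ((k : ℚ) - 1)) ^ Fintype.card (Vtx k (m + 2)) := by
  induction m with
  | zero => rw [charpoly_laplacian_two hk, card_vtx_two]
  | succ m ih =>
    change (laplacian k (m + 3)).charpoly * _ = _ * _ ^ Fintype.card (Vtx k (m + 3))
    apply mul_left_cancel₀ (pow_ne_zero _ (X_sub_C_ne_zero ((k : ℚ) - 1)))
    calc _ = (X - C ((k : ℚ) - 1)) ^ Fintype.card (Vtx k (m + 3)) *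
          ((laplacian k (m + 2)).charpoly * (X - C ((k : ℚ) - 1)) ^ k) := by
          rw [← mul_assoc, charpoly_laplacian_succ, mul_assoc]
      _ = _ := by rw [ih]; ring

end Laplacian

open Polynomial in
/-- The characteristic polynomial of `L = (k-1)·I - A` is
`X * (X - k)^(k-1) * (X - (k-1))^(ℓ - k)` with `ℓ = k * (k-1)^(n-2)`. -/
theorem stmt_10 (k n : ℕ) (hk : 2 ≤ k) (hn : 2 ≤ n) :
    (((k : ℚ) - 1) • (1 : Matrix (Vtx k n) (Vtx k n) ℚ) - AdjMat k n).charpoly =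
      X * (X - C (k : ℚ)) ^ (k - 1) *
        (X - C ((k : ℚ) - 1)) ^ (k * (k - 1) ^ (n - 2) - k) := by
  obtain ⟨m, rfl⟩ : ∃ m, n = m + 2 := ⟨n - 2, by omega⟩
  have hcard : k ≤ Fintype.card (Vtx k (m + 2)) :=
    card_vtx k m ▸ Nat.le_mul_of_pos_right k (Nat.pow_pos (by omega))
  rw [Nat.add_sub_cancel, ← card_vtx]
  apply mul_right_cancel₀ (pow_ne_zero k (X_sub_C_ne_zero ((k : ℚ) - 1)))
  rw [← laplacian, charpoly_laplacian_mul (by omega)]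
  conv_rhs => rw [mul_assoc, ← pow_add, Nat.sub_add_cancel hcard]
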